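/- Fix σ_a ∈ ℝ with 0 < σ_a² < 1, let f(x) = (√(1−x²) + (π − arccos x)·x)/π, let g : [−1,1] → [−1,1] send t to the unique fixed point of x = σ_a²·f(x) + (1−σ_a²)·t, set ∠* = g(0), let h(x) = x/(1 − σ_a²·(π − arccos x)/π), and define k = h ∘ g. Then k is twice differentiable at 0 with k″(0) = (1−σ_a²)²·( h″(∠*) − σ_a²·f′(∠*)·h″(∠*) + σ_a²·h′(∠*)·f″(∠*) ) / (1 − σ_a²·f′(∠*))³, where f′(x) = (π − arccos x)/π and f″(x) = 1/(π·√(1−x²)). -/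

import Mathlib

open Real Set

/-- The dual kernel of the normalized ReLU activation `φ(x) = √2·max(x,0)`. -/
noncomputable def fDual (x : ℝ) : ℝ :=
  (Real.sqrt (1 - x ^ 2) + (Real.pi - Real.arccos x) * x) / Real.pi

/-- The derivative `f′(x) = (π − arccos x)/π` of the dual kernel. -/
noncomputable def fDual' (x : ℝ) : ℝ := (Real.pi - Real.arccos x) / Real.pi

/-- The second derivative `f″(x) = 1/(π·√(1−x²))` of the dual kernel. -/
noncomputable def fDual'' (x : ℝ) : ℝ := 1 / (Real.pi * Real.sqrt (1 - x ^ 2))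

/-- The map `h(x) = x/(1 − σa²·(π − arccos x)/π)` defining the Implicit-NTK. -/
noncomputable def hNTK (σa x : ℝ) : ℝ :=
  x / (1 - σa ^ 2 * (Real.pi - Real.arccos x) / Real.pi)

/-!
Implicit differentiation of `g t = σ² f (g t) + (1 - σ²) t` gives
`g' t = (1 - σ²) / (1 - σ² f' (g t))` near `0`, hence
`g'' 0 = (1 - σ²)² σ² f'' ∠* / (1 - σ² f' ∠*)³`, and the second-order chain rule
`k'' = h'' (g 0) (g' 0)² + h' (g 0) g'' 0` is the formula. The inverse-function step needs `g`
continuous: since `0 ≤ f' ≤ 1`, `f` is `1`-Lipschitz on `[-1, 1]`, which makes `g`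
`1`-Lipschitz.
It also needs `∠* ∈ (-1, 1)`, which holds because neither `±1` solves `x = σ² f x`.
-/

open Filter Topology

theorem hasDerivAt_deriv_comp {𝕜 : Type*} [NontriviallyNormedField 𝕜] {h g g' : 𝕜 → 𝕜}
    {g'' t₀ : 𝕜} (hh : ∀ᶠ x in 𝓝 (g t₀), DifferentiableAt 𝕜 h x)
    (hh' : DifferentiableAt 𝕜 (deriv h) (g t₀))
    (hg : ∀ᶠ t in 𝓝 t₀, HasDerivAt g (g' t) t) (hg' : HasDerivAt g' g'' t₀) :
    HasDerivAt (deriv (h ∘ g))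
      (deriv (deriv h) (g t₀) * g' t₀ ^ 2 + deriv h (g t₀) * g'') t₀ := by
  have hg₀ : HasDerivAt g (g' t₀) t₀ := hg.self_of_nhds
  have hderiv : deriv (h ∘ g) =ᶠ[𝓝 t₀] fun t => deriv h (g t) * g' t := by
    filter_upwards [hg, hg₀.continuousAt.eventually hh] with t hgt hht
    exact (hht.hasDerivAt.comp t hgt).deriv
  refine (((hh'.hasDerivAt.comp t₀ hg₀).mul hg').congr_of_eventuallyEq hderiv).congr_deriv ?_
  simp only [Function.comp_apply]
  ring

theorem hasDerivAt_fDual {x : ℝ} (hx : x ∈ Ioo (-1 : ℝ) 1) :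
    HasDerivAt fDual (fDual' x) x := by
  have hpos : 0 < 1 - x ^ 2 := by nlinarith [hx.1, hx.2]
  have hsqrt : HasDerivAt (fun y => √(1 - y ^ 2)) (-(2 * x) / (2 * √(1 - x ^ 2))) x := by
    refine HasDerivAt.sqrt ?_ hpos.ne'
    simpa using (hasDerivAt_pow 2 x).const_sub 1
  have harccos := (Real.hasDerivAt_arccos hx.1.ne' hx.2.ne).const_sub π
  refine ((hsqrt.add (harccos.mul (hasDerivAt_id x))).div_const π).congr_deriv ?_
  have : √(1 - x ^ 2) ≠ 0 := (Real.sqrt_pos.2 hpos).ne'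
  simp only [fDual', id]
  field_simp
  ring

theorem hasDerivAt_fDual' {x : ℝ} (hx : x ∈ Ioo (-1 : ℝ) 1) :
    HasDerivAt fDual' (fDual'' x) x := by
  refine ((Real.hasDerivAt_arccos hx.1.ne' hx.2.ne).const_sub π |>.div_const π).congr_deriv ?_
  simp only [fDual'']
  field_simp

theorem fDual'_mem_Icc (x : ℝ) : fDual' x ∈ Icc (0 : ℝ) 1 := by
  rw [fDual', mem_Icc, le_div_iff₀ pi_pos, div_le_one pi_pos]
  constructor <;> linarith [arccos_nonneg x, arccos_le_pi x]

theorem one_sub_mul_fDual'_pos {s : ℝ} (hs : s < 1) (x : ℝ) : 0 < 1 - s * fDual' x := by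
  obtain ⟨h0, h1⟩ := fDual'_mem_Icc x
  rcases le_total s 0 with h | h <;> nlinarith

theorem continuous_fDual : Continuous fDual := by
  unfold fDual
  fun_prop

theorem fDual_neg_one : fDual (-1) = 0 := by
  simp [fDual]

theorem fDual_one : fDual 1 = 1 := by
  simp [fDual, pi_ne_zero]

theorem fDual_sub_mem_Icc {x y : ℝ} (hx : x ∈ Icc (-1 : ℝ) 1) (hy : y ∈ Icc (-1 : ℝ) 1)
    (hxy : x ≤ y) : fDual y - fDual x ∈ Icc 0 (y - x) := by
  have hdiff : DifferentiableOn ℝ fDual (interior (Icc (-1 : ℝ) 1)) := by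
    rw [interior_Icc]
    exact fun z hz => (hasDerivAt_fDual hz).differentiableAt.differentiableWithinAt
  have hderiv : ∀ z ∈ interior (Icc (-1 : ℝ) 1), deriv fDual z ∈ Icc (0 : ℝ) 1 := by
    rw [interior_Icc]
    exact fun z hz => (hasDerivAt_fDual hz).deriv ▸ fDual'_mem_Icc z
  have hlow := (convex_Icc (-1 : ℝ) 1).mul_sub_le_image_sub_of_le_deriv
    continuous_fDual.continuousOn hdiff (fun z hz => (hderiv z hz).1) x hx y hy hxy
  have hupp := (convex_Icc (-1 : ℝ) 1).image_sub_le_mul_sub_of_deriv_le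
    continuous_fDual.continuousOn hdiff (fun z hz => (hderiv z hz).2) x hx y hy hxy
  exact ⟨by linarith, by linarith⟩

theorem lipschitzOnWith_fDual : LipschitzOnWith 1 fDual (Icc (-1 : ℝ) 1) := by
  refine LipschitzOnWith.of_dist_le_mul fun x hx y hy => ?_
  rw [NNReal.coe_one, one_mul, dist_eq, dist_eq]
  rcases le_total x y with h | h
  · obtain ⟨h0, h1⟩ := fDual_sub_mem_Icc hx hy h
    rw [abs_sub_comm, abs_of_nonneg h0, abs_sub_comm, abs_of_nonneg (sub_nonneg.2 h)]
    exact h1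
  · obtain ⟨h0, h1⟩ := fDual_sub_mem_Icc hy hx h
    rw [abs_of_nonneg h0, abs_of_nonneg (sub_nonneg.2 h)]
    exact h1

theorem LipschitzOnWith.of_eq_mul_add_one_sub_mul {φ g : ℝ → ℝ} {S T : Set ℝ} {s : ℝ}
    (hs₀ : 0 ≤ s) (hs₁ : s < 1) (hφ : LipschitzOnWith 1 φ S)
    (hg : ∀ t ∈ T, g t ∈ S ∧ g t = s * φ (g t) + (1 - s) * t) :
    LipschitzOnWith 1 g T := by
  refine LipschitzOnWith.of_dist_le_mul fun t ht u hu => ?_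
  obtain ⟨hgt, ht_eq⟩ := hg t ht
  obtain ⟨hgu, hu_eq⟩ := hg u hu
  have hφtu : |φ (g t) - φ (g u)| ≤ |g t - g u| := by
    simpa [dist_eq] using hφ.dist_le_mul _ hgt _ hgu
  have : |g t - g u| ≤ s * |g t - g u| + (1 - s) * |t - u| :=
    calc |g t - g u| = |s * (φ (g t) - φ (g u)) + (1 - s) * (t - u)| := by
          congr 1; linear_combination ht_eq - hu_eq
      _ ≤ |s * (φ (g t) - φ (g u))| + |(1 - s) * (t - u)| := abs_add_le _ _
      _ = s * |φ (g t) - φ (g u)| + (1 - s) * |t - u| := by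
          rw [abs_mul, abs_mul, abs_of_nonneg hs₀, abs_of_pos (sub_pos.2 hs₁)]
      _ ≤ s * |g t - g u| + (1 - s) * |t - u| := by gcongr
  rw [NNReal.coe_one, one_mul, dist_eq, dist_eq]
  nlinarith

theorem mem_Ioo_of_eq_mul_fDual {s x : ℝ} (hs : s < 1) (hx : x ∈ Icc (-1 : ℝ) 1)
    (h : x = s * fDual x) : x ∈ Ioo (-1 : ℝ) 1 := by
  refine ⟨lt_of_le_of_ne hx.1 ?_, lt_of_le_of_ne hx.2 ?_⟩ <;> rintro rfl
  · norm_num [fDual_neg_one] at h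
  · rw [fDual_one, mul_one] at h
    linarith

theorem hasDerivAt_of_eq_mul_fDual_add {s t : ℝ} {g : ℝ → ℝ} (hs : s < 1)
    (hgc : ContinuousOn g (Icc (-1 : ℝ) 1))
    (hg : ∀ u ∈ Icc (-1 : ℝ) 1, g u = s * fDual (g u) + (1 - s) * u)
    (ht : t ∈ Ioo (-1 : ℝ) 1) (hgt : g t ∈ Ioo (-1 : ℝ) 1) :
    HasDerivAt g ((1 - s) / (1 - s * fDual' (g t))) t := by
  have hF : HasDerivAt (fun x => (x - s * fDual x) / (1 - s))
      ((1 - s * fDual' (g t)) / (1 - s)) (g t) :=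
    ((hasDerivAt_id _).sub ((hasDerivAt_fDual hgt).const_mul s)).div_const _
  have hinv : ∀ᶠ u in 𝓝 t, (g u - s * fDual (g u)) / (1 - s) = u := by
    filter_upwards [Icc_mem_nhds ht.1 ht.2] with u hu
    rw [div_eq_iff (sub_pos.2 hs).ne']
    linear_combination hg u hu
  simpa only [inv_div] using hF.of_local_left_inverse (hgc.continuousAt (Icc_mem_nhds ht.1 ht.2))
    (div_ne_zero (one_sub_mul_fDual'_pos hs _).ne' (sub_pos.2 hs).ne') hinv

theorem hNTK_eq (σa x : ℝ) : hNTK σa x = x / (1 - σa ^ 2 * fDual' x) := by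
  rw [hNTK, fDual', mul_div_assoc]

theorem contDiffOn_hNTK {σa : ℝ} (hσ : σa ^ 2 < 1) {n : WithTop ℕ∞} :
    ContDiffOn ℝ n (hNTK σa) (Ioo (-1 : ℝ) 1) := by
  intro x hx
  refine ContDiffAt.contDiffWithinAt ?_
  have hden : ContDiffAt ℝ n (fun y => 1 - σa ^ 2 * fDual' y) x :=
    contDiffAt_const.sub (contDiffAt_const.mul
      ((contDiffAt_const.sub (contDiffAt_arccos hx.1.ne' hx.2.ne)).div_const π))
  rw [show hNTK σa = fun y => y / (1 - σa ^ 2 * fDual' y) from funext (hNTK_eq σa)]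
  exact contDiffAt_id.div hden (one_sub_mul_fDual'_pos hσ x).ne'

theorem eventually_differentiableAt_hNTK {σa x : ℝ} (hσ : σa ^ 2 < 1)
    (hx : x ∈ Ioo (-1 : ℝ) 1) : ∀ᶠ y in 𝓝 x, DifferentiableAt ℝ (hNTK σa) y :=
  eventually_of_mem (Ioo_mem_nhds hx.1 hx.2) fun _ hy =>
    ((contDiffOn_hNTK hσ).differentiableOn one_ne_zero).differentiableAt
      (Ioo_mem_nhds hy.1 hy.2)

theorem differentiableAt_deriv_hNTK {σa x : ℝ} (hσ : σa ^ 2 < 1)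
    (hx : x ∈ Ioo (-1 : ℝ) 1) : DifferentiableAt ℝ (deriv (hNTK σa)) x :=
  (((contDiffOn_hNTK hσ (n := 2)).deriv_of_isOpen isOpen_Ioo (m := 1) (by norm_num))
    |>.differentiableOn one_ne_zero).differentiableAt (Ioo_mem_nhds hx.1 hx.2)

theorem stmt_12_general (σa : ℝ) (hσ1 : σa ^ 2 < 1)
    (g : ℝ → ℝ)
    (hg : ∀ t ∈ Set.Icc (-1 : ℝ) 1,
      g t ∈ Set.Icc (-1 : ℝ) 1 ∧ g t = σa ^ 2 * fDual (g t) + (1 - σa ^ 2) * t) :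
    HasDerivAt (deriv (hNTK σa ∘ g))
      ((1 - σa ^ 2) ^ 2 *
          (deriv (deriv (hNTK σa)) (g 0)
            - σa ^ 2 * fDual' (g 0) * deriv (deriv (hNTK σa)) (g 0)
            + σa ^ 2 * deriv (hNTK σa) (g 0) * fDual'' (g 0))
        / (1 - σa ^ 2 * fDual' (g 0)) ^ 3) 0 := by
  set s := σa ^ 2
  have hgc : ContinuousOn g (Icc (-1 : ℝ) 1) :=
    (LipschitzOnWith.of_eq_mul_add_one_sub_mul (sq_nonneg σa) hσ1
      lipschitzOnWith_fDual hg).continuousOn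
  obtain ⟨hg₀_mem, hg₀_eq⟩ := hg 0 (by norm_num)
  have hg₀ : g 0 ∈ Ioo (-1 : ℝ) 1 :=
    mem_Ioo_of_eq_mul_fDual hσ1 hg₀_mem (by simpa using hg₀_eq)
  have hnear : ∀ᶠ t in 𝓝 (0 : ℝ), t ∈ Ioo (-1 : ℝ) 1 ∧ g t ∈ Ioo (-1 : ℝ) 1 :=
    Eventually.and (Ioo_mem_nhds (by norm_num) (by norm_num))
      ((hgc.continuousAt (Icc_mem_nhds (by norm_num) (by norm_num))).eventually
        (Ioo_mem_nhds hg₀.1 hg₀.2))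
  have hg' : ∀ᶠ t in 𝓝 (0 : ℝ), HasDerivAt g ((1 - s) / (1 - s * fDual' (g t))) t :=
    hnear.mono fun t ht =>
      hasDerivAt_of_eq_mul_fDual_add hσ1 hgc (fun u hu => (hg u hu).2) ht.1 ht.2
  have hD : 0 < 1 - s * fDual' (g 0) := one_sub_mul_fDual'_pos hσ1 (g 0)
  have hg'' := (hasDerivAt_const (0 : ℝ) (1 - s)).div
    ((((hasDerivAt_fDual' hg₀).comp 0 hg'.self_of_nhds).const_mul s).const_sub 1) hD.ne'
  refine (hasDerivAt_deriv_comp (eventually_differentiableAt_hNTK hσ1 hg₀)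
    (differentiableAt_deriv_hNTK hσ1 hg₀) hg' hg'').congr_deriv ?_
  simp only [Function.comp_apply]
  field_simp
  ring

theorem stmt_12 (σa : ℝ) (hσ0 : 0 < σa ^ 2) (hσ1 : σa ^ 2 < 1)
    (g : ℝ → ℝ)
    (hg : ∀ t ∈ Set.Icc (-1 : ℝ) 1,
      g t ∈ Set.Icc (-1 : ℝ) 1 ∧ g t = σa ^ 2 * fDual (g t) + (1 - σa ^ 2) * t) :
    HasDerivAt (deriv (hNTK σa ∘ g))
      ((1 - σa ^ 2) ^ 2 *
          (deriv (deriv (hNTK σa)) (g 0)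
            - σa ^ 2 * fDual' (g 0) * deriv (deriv (hNTK σa)) (g 0)
            + σa ^ 2 * deriv (hNTK σa) (g 0) * fDual'' (g 0))
        / (1 - σa ^ 2 * fDual' (g 0)) ^ 3) 0 :=
  stmt_12_general σa hσ1 g hg
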